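/- arXiv:2103.16232 — 4 statements merged into one kernel-verified Lean document; each statement's English description precedes it below -/
import Mathlib

section
/- For every point z = (W, b₁, b₂, V) in the level set Ω_θ and every index j ∈ {1,…,N₁}, the j-th entry of b₁ satisfies (b₁)_j ≤ θ/λ₁ + √(N₁N₀θ/λ₂) · ‖X‖₁. -/
/-!
On `Ω_θ` the fidelity and penalty terms are nonnegative, so `R(z) ≤ θ`. Since every `vₙ ≥ 0`,
this bounds each entry of `V` by `θ / λ₁` and each entry of `W` by `√(θ / λ₂)`. The constraint
`vₙ ≥ W xₙ + b₁` then gives `(b₁)ᵢ ≤ (vₙ)ᵢ - (W xₙ)ᵢ ≤ θ / λ₁ + √(θ / λ₂) ‖X‖₁`.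
-/

open scoped BigOperators

noncomputable section

/-- A point `z = (W, b₁, b₂, V)`. -/
abbrev Pt (N N₀ N₁ : ℕ) : Type :=
  Matrix (Fin N₁) (Fin N₀) ℝ × (Fin N₁ → ℝ) × (Fin N₀ → ℝ) × Matrix (Fin N₁) (Fin N) ℝ

/-- ReLU: positive part. -/
def relu (y : ℝ) : ℝ := max y 0

variable {N N₀ N₁ : ℕ}

/-- squared Euclidean norm of a point `z = (W,b₁,b₂,V)`. -/
def sqnormPt (z : Pt N N₀ N₁) : ℝ :=
  (∑ i, ∑ j, (z.1 i j) ^ 2) + (∑ i, (z.2.1 i) ^ 2) + (∑ j, (z.2.2.1 j) ^ 2)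
    + (∑ i, ∑ n, (z.2.2.2 i n) ^ 2)

/-- Euclidean norm of a point. -/
def normPt (z : Pt N N₀ N₁) : ℝ := Real.sqrt (sqnormPt z)

/-- Euclidean distance between points. -/
def distPt (z z' : Pt N N₀ N₁) : ℝ := normPt (z - z')

/-- `(W xₙ + b₁)ᵢ`. -/
def preact (X : Matrix (Fin N₀) (Fin N) ℝ) (z : Pt N N₀ N₁) (i : Fin N₁) (n : Fin N) : ℝ :=
  (∑ j, z.1 i j * X j n) + z.2.1 i

/-- `(Wᵀ vₙ + b₂)ⱼ`. -/
def outPre (z : Pt N N₀ N₁) (j : Fin N₀) (n : Fin N) : ℝ :=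
  (∑ i, z.1 i j * z.2.2.2 i n) + z.2.2.1 j

/-- fidelity term `F(z)`. -/
def Fv (X : Matrix (Fin N₀) (Fin N) ℝ) (z : Pt N N₀ N₁) : ℝ :=
  (1 / (N : ℝ)) * ∑ n, ∑ j, (relu (outPre z j n) - X j n) ^ 2

/-- regularization term `R(z)`. -/
def Rv (lam₁ lam₂ : ℝ) (z : Pt N N₀ N₁) : ℝ :=
  lam₁ * (∑ n, ∑ i, z.2.2.2 i n) + lam₂ * ∑ i, ∑ j, (z.1 i j) ^ 2

/-- penalty term `P(z)`. -/
def Pv (β : ℝ) (X : Matrix (Fin N₀) (Fin N) ℝ) (z : Pt N N₀ N₁) : ℝ :=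
  β * ∑ n, ∑ i, (z.2.2.2 i n - relu (preact X z i n))

/-- objective `O(z) = F(z) + R(z) + P(z)`. -/
def Ov (lam₁ lam₂ β : ℝ) (X : Matrix (Fin N₀) (Fin N) ℝ) (z : Pt N N₀ N₁) : ℝ :=
  Fv X z + Rv lam₁ lam₂ z + Pv β X z

/-- `Ω₁ = {z : vₙ = (Wxₙ + b₁)₊}`. -/
def Omega1 (X : Matrix (Fin N₀) (Fin N) ℝ) : Set (Pt N N₀ N₁) :=
  {z | ∀ i n, z.2.2.2 i n = relu (preact X z i n)}

/-- `Ω₂ = {z : vₙ ≥ (Wxₙ + b₁)₊}`. -/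
def Omega2 (X : Matrix (Fin N₀) (Fin N) ℝ) : Set (Pt N N₀ N₁) :=
  {z | ∀ i n, relu (preact X z i n) ≤ z.2.2.2 i n}

/-- level set `Ω_θ = {z ∈ Ω₂ : O(z) ≤ θ}` (also used for `Ω_δ`). -/
def OmegaLev (lam₁ lam₂ β θ : ℝ) (X : Matrix (Fin N₀) (Fin N) ℝ) : Set (Pt N N₀ N₁) :=
  {z | z ∈ Omega2 X ∧ Ov lam₁ lam₂ β X z ≤ θ}

/-- `‖X‖₁`: maximum absolute column sum. -/
def Xcol1 (X : Matrix (Fin N₀) (Fin N) ℝ) : ℝ := ⨆ n, ∑ j, |X j n|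

/-- the constant `α`. -/
def alphaC (N N₀ N₁ : ℕ) (lam₁ lam₂ θ : ℝ) (X : Matrix (Fin N₀) (Fin N) ℝ) : ℝ :=
  max (θ / lam₁ + Real.sqrt ((N₁ : ℝ) * (N₀ : ℝ) * θ / lam₂) * Xcol1 X)
      (θ * Real.sqrt ((N₁ : ℝ) * (N₀ : ℝ) * θ) / (lam₁ * Real.sqrt lam₂)
        + Real.sqrt ((N : ℝ) * θ) + Xcol1 X)

/-- `Ω₃ = {z : ‖b₁‖_∞ ≤ α, ‖b₂‖_∞ ≤ α}`. -/
def Omega3 (lam₁ lam₂ θ : ℝ) (X : Matrix (Fin N₀) (Fin N) ℝ) : Set (Pt N N₀ N₁) :=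
  {z | (∀ i, |z.2.1 i| ≤ alphaC N N₀ N₁ lam₁ lam₂ θ X) ∧
       (∀ j, |z.2.2.1 j| ≤ alphaC N N₀ N₁ lam₁ lam₂ θ X)}

/-- `Z = Ω₂ ∩ Ω₃`. -/
def Zset (lam₁ lam₂ θ : ℝ) (X : Matrix (Fin N₀) (Fin N) ℝ) : Set (Pt N N₀ N₁) :=
  Omega2 X ∩ Omega3 lam₁ lam₂ θ X

/-- tangent cone of `C` at `zb`. -/
def TangentCone (C : Set (Pt N N₀ N₁)) (zb : Pt N N₀ N₁) : Set (Pt N N₀ N₁) :=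
  {d | ∃ zs : ℕ → Pt N N₀ N₁, ∃ ts : ℕ → ℝ,
      (∀ k, zs k ∈ C) ∧ (∀ k, 0 < ts k) ∧
      Filter.Tendsto ts Filter.atTop (nhds 0) ∧
      Filter.Tendsto (fun k => distPt (zs k) zb) Filter.atTop (nhds 0) ∧
      Filter.Tendsto (fun k => normPt ((ts k)⁻¹ • (zs k - zb) - d)) Filter.atTop (nhds 0)}

/-- `zb` is a d-stationary point of `f` over `C`:
`liminf_{t↓0} (f(zb + t d) - f(zb))/t ≥ 0` for every tangent direction `d`. -/
def DStationary (f : Pt N N₀ N₁ → ℝ) (C : Set (Pt N N₀ N₁)) (zb : Pt N N₀ N₁) : Prop :=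
  zb ∈ C ∧ ∀ d ∈ TangentCone C zb, ∀ ε : ℝ, 0 < ε → ∃ δ : ℝ, 0 < δ ∧
    ∀ t : ℝ, 0 < t → t < δ → -ε < (f (zb + t • d) - f zb) / t

/-- smoothing function `s_μ` of the ReLU. -/
def smoothRelu (μ y : ℝ) : ℝ :=
  if y < 0 then 0 else if y ≤ μ then y ^ 2 / (2 * μ) else y - μ / 2

/-- smoothed fidelity term `F̃(z, μ)`. -/
def Ftil (X : Matrix (Fin N₀) (Fin N) ℝ) (z : Pt N N₀ N₁) (μ : ℝ) : ℝ :=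
  (1 / (N : ℝ)) * (∑ n, ∑ j, (relu (outPre z j n)) ^ 2)
    + (1 / (N : ℝ)) * (∑ j, ∑ n, (X j n) ^ 2)
    - (2 / (N : ℝ)) * ∑ n, ∑ j, X j n * smoothRelu μ (outPre z j n)

/-- smoothed penalty term `P̃(z, μ)`. -/
def Ptil (β : ℝ) (X : Matrix (Fin N₀) (Fin N) ℝ) (z : Pt N N₀ N₁) (μ : ℝ) : ℝ :=
  β * ∑ n, ∑ i, (z.2.2.2 i n - smoothRelu μ (preact X z i n))

/-- smoothed objective `Õ(z, μ)`. -/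
def Otil (lam₁ lam₂ β : ℝ) (X : Matrix (Fin N₀) (Fin N) ℝ) (z : Pt N N₀ N₁) (μ : ℝ) : ℝ :=
  Ftil X z μ + Ptil β X z μ + Rv lam₁ lam₂ z

open Finset

lemma le_sum_sum_of_nonneg {α β M : Type*} [Fintype α] [Fintype β] [AddCommMonoid M]
    [PartialOrder M] [IsOrderedAddMonoid M] {f : α → β → M} (hf : ∀ a b, 0 ≤ f a b)
    (a : α) (b : β) : f a b ≤ ∑ a', ∑ b', f a' b' :=
  calc f a b ≤ ∑ b', f a b' := single_le_sum (fun b' _ => hf a b') (mem_univ b)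
    _ ≤ ∑ a', ∑ b', f a' b' :=
      single_le_sum (f := fun a' => ∑ b', f a' b') (fun a' _ => sum_nonneg fun b' _ => hf a' b')
        (mem_univ a)

lemma neg_sum_mul_le_of_abs_le {ι : Type*} [Fintype ι] {w x : ι → ℝ} {c : ℝ}
    (hw : ∀ j, |w j| ≤ c) : -(∑ j, w j * x j) ≤ c * ∑ j, |x j| :=
  calc -(∑ j, w j * x j) ≤ ∑ j, |w j * x j| := (neg_le_abs _).trans (abs_sum_le_sum_abs _ _)
    _ ≤ ∑ j, c * |x j| := sum_le_sum fun j _ => by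
      rw [abs_mul]; exact mul_le_mul_of_nonneg_right (hw j) (abs_nonneg _)
    _ = c * ∑ j, |x j| := (mul_sum _ _ _).symm

lemma sum_abs_le_Xcol1 (X : Matrix (Fin N₀) (Fin N) ℝ) (n : Fin N) :
    ∑ j, |X j n| ≤ Xcol1 X :=
  le_ciSup (Finite.bddAbove_range fun n' => ∑ j, |X j n'|) n

variable {X : Matrix (Fin N₀) (Fin N) ℝ} {z : Pt N N₀ N₁}

lemma Fv_nonneg : 0 ≤ Fv X z := by
  unfold Fv; positivity

lemma V_nonneg_of_mem_Omega2 (hz : z ∈ Omega2 X) (i : Fin N₁) (n : Fin N) : 0 ≤ z.2.2.2 i n :=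
  (le_max_right _ _).trans (hz i n)

lemma Pv_nonneg_of_mem_Omega2 {β : ℝ} (hβ : 0 ≤ β) (hz : z ∈ Omega2 X) : 0 ≤ Pv β X z :=
  mul_nonneg hβ <| sum_nonneg fun n _ => sum_nonneg fun i _ => sub_nonneg.2 (hz i n)

lemma bias_le_of_mem_Omega2 (hz : z ∈ Omega2 X) (i : Fin N₁) (n : Fin N) :
    z.2.1 i ≤ z.2.2.2 i n - ∑ j, z.1 i j * X j n := by
  have h := (le_max_left _ _).trans (hz i n)
  unfold preact at h
  linarith

section RegularizerBounds

variable {lam₁ lam₂ θ : ℝ}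

lemma V_le_of_Rv_le (hlam₁ : 0 < lam₁) (hlam₂ : 0 ≤ lam₂) (hV : ∀ i n, 0 ≤ z.2.2.2 i n)
    (hR : Rv lam₁ lam₂ z ≤ θ) (i : Fin N₁) (n : Fin N) : z.2.2.2 i n ≤ θ / lam₁ := by
  have hv := le_sum_sum_of_nonneg (fun n i => hV i n) n i
  have hW : 0 ≤ lam₂ * ∑ i, ∑ j, (z.1 i j) ^ 2 := by positivity
  unfold Rv at hR
  rw [le_div_iff₀ hlam₁]
  nlinarith

lemma sq_W_le_of_Rv_le (hlam₁ : 0 ≤ lam₁) (hlam₂ : 0 < lam₂) (hV : ∀ i n, 0 ≤ z.2.2.2 i n)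
    (hR : Rv lam₁ lam₂ z ≤ θ) (i : Fin N₁) (j : Fin N₀) : (z.1 i j) ^ 2 ≤ θ / lam₂ := by
  have hw := le_sum_sum_of_nonneg (fun i j => sq_nonneg (z.1 i j)) i j
  have hv : 0 ≤ lam₁ * ∑ n, ∑ i, z.2.2.2 i n :=
    mul_nonneg hlam₁ (sum_nonneg fun n _ => sum_nonneg fun i _ => hV i n)
  unfold Rv at hR
  rw [le_div_iff₀ hlam₂]
  nlinarith

-- The factor `N₁ N₀` only weakens the bound; the indices `i` and `j` witness `1 ≤ N₁ N₀`.
lemma abs_W_le_of_Rv_le (hlam₁ : 0 ≤ lam₁) (hlam₂ : 0 < lam₂) (hV : ∀ i n, 0 ≤ z.2.2.2 i n)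
    (hR : Rv lam₁ lam₂ z ≤ θ) (i : Fin N₁) (j : Fin N₀) :
    |z.1 i j| ≤ Real.sqrt ((N₁ : ℝ) * (N₀ : ℝ) * θ / lam₂) := by
  have hsq := sq_W_le_of_Rv_le hlam₁ hlam₂ hV hR i j
  have hθ : 0 ≤ θ / lam₂ := (sq_nonneg _).trans hsq
  have hN : (1 : ℝ) ≤ (N₁ : ℝ) * (N₀ : ℝ) :=
    one_le_mul_of_one_le_of_one_le (by exact_mod_cast i.pos) (by exact_mod_cast j.pos)
  rw [← Real.sqrt_sq_eq_abs, mul_div_assoc]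
  exact Real.sqrt_le_sqrt (hsq.trans (le_mul_of_one_le_left hθ hN))

end RegularizerBounds

lemma Rv_le_of_mem_OmegaLev {lam₁ lam₂ β θ : ℝ} (hβ : 0 ≤ β)
    (hz : z ∈ OmegaLev lam₁ lam₂ β θ X) : Rv lam₁ lam₂ z ≤ θ := by
  have hF : 0 ≤ Fv X z := Fv_nonneg
  have hP := Pv_nonneg_of_mem_Omega2 hβ hz.1
  have hO := hz.2
  unfold Ov at hO
  linarith

theorem stmt1_general (N N₀ N₁ : ℕ) (hN : 0 < N)
    (lam₁ lam₂ β θ : ℝ) (hlam₁ : 0 < lam₁) (hlam₂ : 0 < lam₂) (hbeta : 0 < β)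
    (X : Matrix (Fin N₀) (Fin N) ℝ)
    (z : Pt N N₀ N₁) (hz : z ∈ OmegaLev lam₁ lam₂ β θ X) (i : Fin N₁) :
    z.2.1 i ≤ θ / lam₁ + Real.sqrt ((N₁ : ℝ) * (N₀ : ℝ) * θ / lam₂) * Xcol1 X := by
  let n : Fin N := ⟨0, hN⟩
  have hV := V_nonneg_of_mem_Omega2 hz.1
  have hR := Rv_le_of_mem_OmegaLev hbeta.le hz
  have hv := V_le_of_Rv_le hlam₁ hlam₂.le hV hR i n
  have hWx := neg_sum_mul_le_of_abs_le (x := fun j => X j n)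
    (abs_W_le_of_Rv_le hlam₁.le hlam₂ hV hR i)
  have hX := mul_le_mul_of_nonneg_left (sum_abs_le_Xcol1 X n)
    (Real.sqrt_nonneg ((N₁ : ℝ) * (N₀ : ℝ) * θ / lam₂))
  linarith [bias_le_of_mem_Omega2 hz.1 i n]

theorem stmt1 (N N₀ N₁ : ℕ) (hN : 0 < N) (hN₀ : 0 < N₀) (hN₁ : 0 < N₁)
    (lam₁ lam₂ β θ : ℝ) (hlam₁ : 0 < lam₁) (hlam₂ : 0 < lam₂) (hbeta : 0 < β)
    (X : Matrix (Fin N₀) (Fin N) ℝ)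
    (hθ : (1 / (N : ℝ)) * ∑ j, ∑ n, (X j n) ^ 2 < θ)
    (z : Pt N N₀ N₁) (hz : z ∈ OmegaLev lam₁ lam₂ β θ X) (i : Fin N₁) :
    z.2.1 i ≤ θ / lam₁ + Real.sqrt ((N₁ : ℝ) * (N₀ : ℝ) * θ / lam₂) * Xcol1 X :=
  stmt1_general N N₀ N₁ hN lam₁ lam₂ β θ hlam₁ hlam₂ hbeta X z hz i
end
end

section
/- For every z ∈ Ω₂, the Euclidean distance from z to the set Ω₁ satisfies β · dist(z, Ω₁) ≤ P(z). -/
open scoped BigOperators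

noncomputable section

variable {N N₀ N₁ : ℕ}

/-! Since `Ω₂` constrains `vₙ` only from below, replacing `V` by the columns `(Wxₙ + b₁)₊` lands in
`Ω₁` and moves `z` by the Euclidean norm of the nonnegative slack `vₙ - (Wxₙ + b₁)₊`; that norm is
at most the sum of the slack entries, which is `P(z) / β`. -/

theorem Real.sqrt_sum_sq_le_sum_of_nonneg {ι : Type*} (s : Finset ι) {f : ι → ℝ}
    (hf : ∀ i ∈ s, 0 ≤ f i) : √(∑ i ∈ s, f i ^ 2) ≤ ∑ i ∈ s, f i :=
  Real.sqrt_le_iff.2 ⟨Finset.sum_nonneg hf, Finset.sum_sq_le_sq_sum_of_nonneg hf⟩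

theorem Real.sqrt_sum_sum_sq_le_sum_sum_of_nonneg {ι κ : Type*} [Fintype ι] [Fintype κ]
    {f : ι → κ → ℝ} (hf : ∀ i j, 0 ≤ f i j) : √(∑ i, ∑ j, f i j ^ 2) ≤ ∑ i, ∑ j, f i j := by
  rw [← Fintype.sum_prod_type' (fun i j => f i j ^ 2), ← Fintype.sum_prod_type']
  exact Real.sqrt_sum_sq_le_sum_of_nonneg _ fun p _ => hf p.1 p.2

section

variable {N N₀ N₁ : ℕ}

theorem sInf_distPt_le {S : Set (Pt N N₀ N₁)} (z : Pt N N₀ N₁) {z' : Pt N N₀ N₁} (hz' : z' ∈ S) :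
    sInf {r : ℝ | ∃ z' : Pt N N₀ N₁, z' ∈ S ∧ r = distPt z z'} ≤ distPt z z' :=
  csInf_le ⟨0, by rintro _ ⟨_, -, rfl⟩; exact Real.sqrt_nonneg _⟩ ⟨z', hz', rfl⟩

def projOmega1 (X : Matrix (Fin N₀) (Fin N) ℝ) (z : Pt N N₀ N₁) : Pt N N₀ N₁ :=
  (z.1, z.2.1, z.2.2.1, fun i n => relu (preact X z i n))

theorem projOmega1_mem_Omega1 (X : Matrix (Fin N₀) (Fin N) ℝ) (z : Pt N N₀ N₁) :
    projOmega1 X z ∈ Omega1 X :=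
  fun _ _ => rfl

theorem distPt_projOmega1 (X : Matrix (Fin N₀) (Fin N) ℝ) (z : Pt N N₀ N₁) :
    distPt z (projOmega1 X z) = √(∑ i, ∑ n, (z.2.2.2 i n - relu (preact X z i n)) ^ 2) := by
  simp [distPt, normPt, sqnormPt, projOmega1]
  rfl

theorem distPt_projOmega1_le (X : Matrix (Fin N₀) (Fin N) ℝ) {z : Pt N N₀ N₁}
    (hz : z ∈ Omega2 X) :
    distPt z (projOmega1 X z) ≤ ∑ i, ∑ n, (z.2.2.2 i n - relu (preact X z i n)) := by
  rw [distPt_projOmega1]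
  exact Real.sqrt_sum_sum_sq_le_sum_sum_of_nonneg fun i n => sub_nonneg.2 (hz i n)

end

theorem stmt6_general (N N₀ N₁ : ℕ)
    (β : ℝ) (hbeta : 0 < β) (X : Matrix (Fin N₀) (Fin N) ℝ)
    (z : Pt N N₀ N₁) (hz : z ∈ Omega2 X) :
    β * sInf {r : ℝ | ∃ z' : Pt N N₀ N₁, z' ∈ Omega1 X ∧ r = distPt z z'} ≤ Pv β X z := by
  calc β * sInf {r : ℝ | ∃ z' : Pt N N₀ N₁, z' ∈ Omega1 X ∧ r = distPt z z'}
      ≤ β * distPt z (projOmega1 X z) := by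
        gcongr; exact sInf_distPt_le z (projOmega1_mem_Omega1 X z)
    _ ≤ β * ∑ i, ∑ n, (z.2.2.2 i n - relu (preact X z i n)) := by
        gcongr; exact distPt_projOmega1_le X hz
    _ = Pv β X z := by rw [Pv, Finset.sum_comm]

theorem stmt6 (N N₀ N₁ : ℕ) (hN : 0 < N) (hN₀ : 0 < N₀) (hN₁ : 0 < N₁)
    (β : ℝ) (hbeta : 0 < β) (X : Matrix (Fin N₀) (Fin N) ℝ)
    (z : Pt N N₀ N₁) (hz : z ∈ Omega2 X) :
    β * sInf {r : ℝ | ∃ z' : Pt N N₀ N₁, z' ∈ Omega1 X ∧ r = distPt z z'} ≤ Pv β X z :=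
  stmt6_general N N₀ N₁ β hbeta X z hz
end
end

section
/- Suppose L_F and L_R are Lipschitz moduli of F and R on Ω_θ and β > L_F + L_R. If z̄ ∈ Ω_θ is a global minimizer of F + R over Ω₁ (i.e. z̄ ∈ Ω₁ and F(z̄) + R(z̄) ≤ F(z) + R(z) for all z ∈ Ω₁), then z̄ is a global minimizer of O over Ω₂. -/
open scoped BigOperators

noncomputable section

variable {N N₀ N₁ : ℕ}

/-
Moving the `V`-block of a point `z ∈ Ω₂` in a straight line towards `((W xₙ + b₁)₊)ₙ` leaves
`W` and `b₁`, hence the target, unchanged. Along this segment the penalty `P` falls linearly, at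
rate `β` times the total gap `G = ∑ₙ eᵀ(vₙ - (W xₙ + b₁)₊)`, while the point moves at speed at
most `G` (the `ℓ²` norm of a nonnegative matrix is at most its entry sum). On `Ω_θ` the terms
`F` and `R` can therefore rise at rate at most `(L_F + L_R) G ≤ β G`, so `O` does not increase
as long as the segment stays in `Ω_θ`; when `O(z) < θ`, continuity keeps it there. The endpoint
lies in `Ω₁`, where `O = F + R ≥ F(z̄) + R(z̄) = O(z̄)`. When `O(z) ≥ θ`, already `O(z̄) ≤ θ`.
-/

open Filter Topology

theorem ContinuousOn.apply_le_left_of_antitone_on_sublevel {g : ℝ → ℝ} {a b θ : ℝ}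
    (hg : ContinuousOn g (Set.Icc a b)) (ha : g a < θ)
    (hanti : ∀ s ∈ Set.Icc a b, ∀ t ∈ Set.Icc a b, s ≤ t → g s ≤ θ → g t ≤ θ → g t ≤ g s) :
    ∀ t ∈ Set.Icc a b, g t ≤ g a := by
  have hclosed : IsClosed ({t | g t ≤ g a} ∩ Set.Icc a b) := by
    rw [Set.inter_comm]
    exact hg.preimage_isClosed_of_isClosed isClosed_Icc isClosed_Iic
  refine fun t ht => IsClosed.Icc_subset_of_forall_mem_nhdsWithin hclosed (le_refl (g a)) ?_ ht
  rintro x ⟨hxa, hxa', hxb⟩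
  have hxθ : g x < θ := lt_of_le_of_lt hxa ha
  have hnear : ∀ᶠ t in 𝓝[>] x, t ∈ Set.Ioo x b ∧ g t < θ := by
    rw [← nhdsWithin_Ioo_eq_nhdsGT hxb]
    refine eventually_mem_nhdsWithin.and ?_
    have hsub : Set.Ioo x b ⊆ Set.Icc a b := fun t ht => ⟨hxa'.trans ht.1.le, ht.2.le⟩
    exact ((hg x ⟨hxa', hxb.le⟩).mono hsub).eventually (eventually_lt_nhds hxθ)
  filter_upwards [hnear] with t ⟨ht, htθ⟩
  exact (hanti x ⟨hxa', hxb.le⟩ t ⟨hxa'.trans ht.1.le, ht.2.le⟩ ht.1.le hxθ.le htθ.le).trans hxa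

theorem sum_sum_sq_le_sq_sum_sum {ι κ : Type*} [Fintype ι] [Fintype κ] {M : ι → κ → ℝ}
    (hM : ∀ i k, 0 ≤ M i k) : ∑ i, ∑ k, M i k ^ 2 ≤ (∑ i, ∑ k, M i k) ^ 2 := by
  simp only [← Fintype.sum_prod_type']
  exact Finset.sum_sq_le_sq_sum_of_nonneg fun p _ => hM p.1 p.2

def reluGap (X : Matrix (Fin N₀) (Fin N) ℝ) (z : Pt N N₀ N₁) (i : Fin N₁) (n : Fin N) : ℝ :=
  z.2.2.2 i n - relu (preact X z i n)

def lineToOmega1 (X : Matrix (Fin N₀) (Fin N) ℝ) (z : Pt N N₀ N₁) (t : ℝ) : Pt N N₀ N₁ :=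
  (z.1, z.2.1, z.2.2.1, fun i n => z.2.2.2 i n - t * reluGap X z i n)

section lineToOmega1

variable (X : Matrix (Fin N₀) (Fin N) ℝ) (z : Pt N N₀ N₁)

theorem Pv_eq_mul_sum_reluGap (β : ℝ) : Pv β X z = β * ∑ n, ∑ i, reluGap X z i n := rfl

theorem mem_Omega2_iff_reluGap_nonneg : z ∈ Omega2 X ↔ ∀ i n, 0 ≤ reluGap X z i n := by
  simp only [Omega2, reluGap, Set.mem_ofPred_eq, sub_nonneg]

theorem Ov_eq_of_mem_Omega1 (lam₁ lam₂ β : ℝ) (hz : z ∈ Omega1 X) :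
    Ov lam₁ lam₂ β X z = Fv X z + Rv lam₁ lam₂ z := by
  have hgap : ∀ i n, reluGap X z i n = 0 := fun i n => sub_eq_zero.2 (hz i n)
  simp only [Ov, Pv_eq_mul_sum_reluGap, hgap, Finset.sum_const_zero, mul_zero, add_zero]

theorem lineToOmega1_zero : lineToOmega1 X z 0 = z := by
  simp only [lineToOmega1, zero_mul, sub_zero]

theorem reluGap_lineToOmega1 (t : ℝ) (i : Fin N₁) (n : Fin N) :
    reluGap X (lineToOmega1 X z t) i n = (1 - t) * reluGap X z i n := by
  -- `preact` does not read the `V`-block, which is all the line moves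
  change z.2.2.2 i n - t * reluGap X z i n - relu (preact X z i n) = _
  rw [reluGap]
  ring

theorem Pv_lineToOmega1 (β t : ℝ) : Pv β X (lineToOmega1 X z t) = (1 - t) * Pv β X z := by
  simp only [Pv_eq_mul_sum_reluGap, reluGap_lineToOmega1, ← Finset.mul_sum]
  ring

theorem lineToOmega1_one_mem_Omega1 : lineToOmega1 X z 1 ∈ Omega1 X := fun i n =>
  sub_eq_zero.1 ((reluGap_lineToOmega1 X z 1 i n).trans (by ring))

theorem lineToOmega1_mem_Omega2 (hz : z ∈ Omega2 X) {t : ℝ} (ht : t ≤ 1) :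
    lineToOmega1 X z t ∈ Omega2 X := by
  rw [mem_Omega2_iff_reluGap_nonneg] at hz ⊢
  intro i n
  rw [reluGap_lineToOmega1]
  exact mul_nonneg (sub_nonneg.2 ht) (hz i n)

theorem continuous_Ov_lineToOmega1 (lam₁ lam₂ β : ℝ) :
    Continuous fun t => Ov lam₁ lam₂ β X (lineToOmega1 X z t) := by
  simp only [Ov, Fv, Rv, Pv, relu, outPre, preact, lineToOmega1]
  fun_prop

theorem distPt_lineToOmega1_le (hz : z ∈ Omega2 X) (s t : ℝ) :
    distPt (lineToOmega1 X z t) (lineToOmega1 X z s) ≤ |t - s| * ∑ n, ∑ i, reluGap X z i n := by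
  have hgap := (mem_Omega2_iff_reluGap_nonneg X z).1 hz
  have hdiff : lineToOmega1 X z t - lineToOmega1 X z s
      = (0, 0, 0, fun i n => (s - t) * reluGap X z i n) := by
    refine Prod.ext (sub_self _) (Prod.ext (sub_self _) (Prod.ext (sub_self _) ?_))
    funext i n
    change z.2.2.2 i n - t * reluGap X z i n - (z.2.2.2 i n - s * reluGap X z i n) = _
    ring
  have hsq : sqnormPt (lineToOmega1 X z t - lineToOmega1 X z s)
      = (t - s) ^ 2 * ∑ n, ∑ i, reluGap X z i n ^ 2 := by
    simp only [sqnormPt, hdiff, Matrix.zero_apply, Pi.zero_apply, ne_eq, OfNat.ofNat_ne_zero,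
      not_false_eq_true, zero_pow, Finset.sum_const_zero, zero_add, Finset.mul_sum]
    rw [Finset.sum_comm]
    exact Finset.sum_congr rfl fun n _ => Finset.sum_congr rfl fun i _ => by ring
  have hG : 0 ≤ ∑ n, ∑ i, reluGap X z i n :=
    Finset.sum_nonneg fun n _ => Finset.sum_nonneg fun i _ => hgap i n
  rw [distPt, normPt, hsq, Real.sqrt_le_iff, mul_pow, sq_abs]
  exact ⟨mul_nonneg (abs_nonneg _) hG,
    mul_le_mul_of_nonneg_left (sum_sum_sq_le_sq_sum_sum fun n i => hgap i n) (sq_nonneg _)⟩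

end lineToOmega1

section descent

variable {X : Matrix (Fin N₀) (Fin N) ℝ} {z : Pt N N₀ N₁} {lam₁ lam₂ β LF LR : ℝ}
  {S : Set (Pt N N₀ N₁)}

theorem Ov_lineToOmega1_le (hLF : 0 ≤ LF) (hLR : 0 ≤ LR)
    (hLipF : ∀ w ∈ S, ∀ w' ∈ S, |Fv X w - Fv X w'| ≤ LF * distPt w w')
    (hLipR : ∀ w ∈ S, ∀ w' ∈ S, |Rv lam₁ lam₂ w - Rv lam₁ lam₂ w'| ≤ LR * distPt w w')
    (hpen : LF + LR ≤ β) (hz : z ∈ Omega2 X) {s t : ℝ} (hst : s ≤ t)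
    (hs : lineToOmega1 X z s ∈ S) (ht : lineToOmega1 X z t ∈ S) :
    Ov lam₁ lam₂ β X (lineToOmega1 X z t) ≤ Ov lam₁ lam₂ β X (lineToOmega1 X z s) := by
  set G := ∑ n, ∑ i, reluGap X z i n
  have hG : 0 ≤ G := Finset.sum_nonneg fun n _ => Finset.sum_nonneg fun i _ =>
    (mem_Omega2_iff_reluGap_nonneg X z).1 hz i n
  have hdist := distPt_lineToOmega1_le X z hz s t
  rw [abs_of_nonneg (sub_nonneg.2 hst)] at hdist
  have hF : Fv X (lineToOmega1 X z t) - Fv X (lineToOmega1 X z s) ≤ LF * ((t - s) * G) :=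
    (le_abs_self _).trans ((hLipF _ ht _ hs).trans (mul_le_mul_of_nonneg_left hdist hLF))
  have hR : Rv lam₁ lam₂ (lineToOmega1 X z t) - Rv lam₁ lam₂ (lineToOmega1 X z s)
      ≤ LR * ((t - s) * G) :=
    (le_abs_self _).trans ((hLipR _ ht _ hs).trans (mul_le_mul_of_nonneg_left hdist hLR))
  have hslack : 0 ≤ (β - (LF + LR)) * ((t - s) * G) :=
    mul_nonneg (sub_nonneg.2 hpen) (mul_nonneg (sub_nonneg.2 hst) hG)
  simp only [Ov, Pv_lineToOmega1, Pv_eq_mul_sum_reluGap X z β]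
  linear_combination hF + hR + hslack

theorem Ov_lineToOmega1_one_le {θ : ℝ}
    (hLF : 0 ≤ LF) (hLR : 0 ≤ LR)
    (hLipF : ∀ w ∈ (OmegaLev lam₁ lam₂ β θ X : Set (Pt N N₀ N₁)),
      ∀ w' ∈ OmegaLev lam₁ lam₂ β θ X, |Fv X w - Fv X w'| ≤ LF * distPt w w')
    (hLipR : ∀ w ∈ (OmegaLev lam₁ lam₂ β θ X : Set (Pt N N₀ N₁)),
      ∀ w' ∈ OmegaLev lam₁ lam₂ β θ X, |Rv lam₁ lam₂ w - Rv lam₁ lam₂ w'| ≤ LR * distPt w w')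
    (hpen : LF + LR ≤ β) (hz : z ∈ Omega2 X) (hzθ : Ov lam₁ lam₂ β X z < θ) :
    Ov lam₁ lam₂ β X (lineToOmega1 X z 1) ≤ Ov lam₁ lam₂ β X z := by
  have hmem : ∀ t ∈ Set.Icc (0 : ℝ) 1, Ov lam₁ lam₂ β X (lineToOmega1 X z t) ≤ θ →
      lineToOmega1 X z t ∈ OmegaLev lam₁ lam₂ β θ X :=
    fun t ht hθ => ⟨lineToOmega1_mem_Omega2 X z hz ht.2, hθ⟩
  have key := (continuous_Ov_lineToOmega1 X z lam₁ lam₂ β).continuousOn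
    |>.apply_le_left_of_antitone_on_sublevel (by rwa [lineToOmega1_zero])
      fun s hs t ht hst hsθ htθ =>
        Ov_lineToOmega1_le hLF hLR hLipF hLipR hpen hz hst (hmem s hs hsθ) (hmem t ht htθ)
  simpa only [lineToOmega1_zero] using key 1 ⟨zero_le_one, le_rfl⟩

end descent

theorem stmt7_general (N N₀ N₁ : ℕ)
    (lam₁ lam₂ β θ : ℝ)
    (X : Matrix (Fin N₀) (Fin N) ℝ)
    (LF LR : ℝ) (hLF : 0 ≤ LF) (hLR : 0 ≤ LR)
    (hLipF : ∀ z : Pt N N₀ N₁, z ∈ OmegaLev lam₁ lam₂ β θ X →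
      ∀ z' : Pt N N₀ N₁, z' ∈ OmegaLev lam₁ lam₂ β θ X →
        |Fv X z - Fv X z'| ≤ LF * distPt z z')
    (hLipR : ∀ z : Pt N N₀ N₁, z ∈ OmegaLev lam₁ lam₂ β θ X →
      ∀ z' : Pt N N₀ N₁, z' ∈ OmegaLev lam₁ lam₂ β θ X →
        |Rv lam₁ lam₂ z - Rv lam₁ lam₂ z'| ≤ LR * distPt z z')
    (hpen : LF + LR < β)
    (zb : Pt N N₀ N₁) (hzbLev : zb ∈ OmegaLev lam₁ lam₂ β θ X) (hzb1 : zb ∈ Omega1 X)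
    (hmin : ∀ z : Pt N N₀ N₁, z ∈ Omega1 X →
      Fv X zb + Rv lam₁ lam₂ zb ≤ Fv X z + Rv lam₁ lam₂ z) :
    zb ∈ Omega2 X ∧
    ∀ z : Pt N N₀ N₁, z ∈ Omega2 X → Ov lam₁ lam₂ β X zb ≤ Ov lam₁ lam₂ β X z := by
  refine ⟨hzbLev.1, fun z hz => ?_⟩
  rcases le_or_gt θ (Ov lam₁ lam₂ β X z) with hzθ | hzθ
  · exact hzbLev.2.trans hzθ
  have hend := lineToOmega1_one_mem_Omega1 X z
  calc Ov lam₁ lam₂ β X zb = Fv X zb + Rv lam₁ lam₂ zb := Ov_eq_of_mem_Omega1 X zb _ _ _ hzb1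
    _ ≤ Fv X (lineToOmega1 X z 1) + Rv lam₁ lam₂ (lineToOmega1 X z 1) := hmin _ hend
    _ = Ov lam₁ lam₂ β X (lineToOmega1 X z 1) := (Ov_eq_of_mem_Omega1 X _ _ _ _ hend).symm
    _ ≤ Ov lam₁ lam₂ β X z := Ov_lineToOmega1_one_le hLF hLR hLipF hLipR hpen.le hz hzθ

theorem stmt7 (N N₀ N₁ : ℕ) (hN : 0 < N) (hN₀ : 0 < N₀) (hN₁ : 0 < N₁)
    (lam₁ lam₂ β θ : ℝ) (hlam₁ : 0 < lam₁) (hlam₂ : 0 < lam₂) (hbeta : 0 < β)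
    (X : Matrix (Fin N₀) (Fin N) ℝ)
    (hθ : (1 / (N : ℝ)) * ∑ j, ∑ n, (X j n) ^ 2 < θ)
    (LF LR : ℝ) (hLF : 0 ≤ LF) (hLR : 0 ≤ LR)
    (hLipF : ∀ z : Pt N N₀ N₁, z ∈ OmegaLev lam₁ lam₂ β θ X →
      ∀ z' : Pt N N₀ N₁, z' ∈ OmegaLev lam₁ lam₂ β θ X →
        |Fv X z - Fv X z'| ≤ LF * distPt z z')
    (hLipR : ∀ z : Pt N N₀ N₁, z ∈ OmegaLev lam₁ lam₂ β θ X →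
      ∀ z' : Pt N N₀ N₁, z' ∈ OmegaLev lam₁ lam₂ β θ X →
        |Rv lam₁ lam₂ z - Rv lam₁ lam₂ z'| ≤ LR * distPt z z')
    (hpen : LF + LR < β)
    (zb : Pt N N₀ N₁) (hzbLev : zb ∈ OmegaLev lam₁ lam₂ β θ X) (hzb1 : zb ∈ Omega1 X)
    (hmin : ∀ z : Pt N N₀ N₁, z ∈ Omega1 X →
      Fv X zb + Rv lam₁ lam₂ zb ≤ Fv X z + Rv lam₁ lam₂ z) :
    zb ∈ Omega2 X ∧
    ∀ z : Pt N N₀ N₁, z ∈ Omega2 X → Ov lam₁ lam₂ β X zb ≤ Ov lam₁ lam₂ β X z :=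
  stmt7_general N N₀ N₁ lam₁ lam₂ β θ X LF LR hLF hLR hLipF hLipR hpen zb hzbLev hzb1 hmin
end
end

section
/- Let z̄ = (W̄, b̄₁, b̄₂, V̄) ∈ Ω₂ with O(z̄) ≤ θ and suppose β ≥ λ₁. Define V̂ by v̂ₙ = (W̄xₙ + b̄₁)₊ for n = 1,…,N. Then (1/N)∑_{n=1}^N ‖(W̄ᵀv̂ₙ + b̄₂)₊ − xₙ‖₂² + λ₁∑_{n=1}^N eᵀv̂ₙ ≤ 3θ + 2Nθ³/(λ₁²λ₂). -/
open scoped BigOperators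

noncomputable section

variable {N N₀ N₁ : ℕ}

/-!
On `Ω₂` write `vₙ = v̂ₙ + Δₙ` with `Δₙ ≥ 0`. Then
`O(z̄) = F + λ₁ ∑ eᵀv̂ₙ + λ₂‖W̄‖_F² + (λ₁ + β) ∑ eᵀΔₙ` is a sum of nonnegative terms, so each of
`F`, `λ₁ ∑ eᵀv̂ₙ`, `λ₂‖W̄‖_F²`, `λ₁ ∑ eᵀΔₙ` is at most `θ`. Passing from `V̄` to `V̂` moves the
output pre-activations by `W̄ᵀΔₙ`; as the ReLU is 1-Lipschitz, Cauchy–Schwarz bounds the new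
fidelity by `2F + (2/N)‖W̄‖_F² (∑ eᵀΔₙ)² ≤ 2θ + 2θ³/(Nλ₁²λ₂)`.
-/

open Finset

lemma sq_relu_sub_le (a b x : ℝ) :
    (relu a - x) ^ 2 ≤ 2 * (relu b - x) ^ 2 + 2 * (a - b) ^ 2 := by
  have hlip : (relu a - relu b) ^ 2 ≤ (a - b) ^ 2 :=
    sq_le_sq.2 (abs_max_sub_max_le_abs a b 0)
  nlinarith [sq_nonneg (relu a - relu b - (relu b - x))]

lemma sum_sq_sum_mul_le {ι κ : Type*} [Fintype ι] [Fintype κ] (W : ι → κ → ℝ) {d : ι → ℝ}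
    (hd : ∀ i, 0 ≤ d i) :
    ∑ j, (∑ i, W i j * d i) ^ 2 ≤ (∑ i, ∑ j, W i j ^ 2) * (∑ i, d i) ^ 2 :=
  calc ∑ j, (∑ i, W i j * d i) ^ 2
      ≤ ∑ j, (∑ i, W i j ^ 2) * ∑ i, d i ^ 2 :=
        sum_le_sum fun j _ => sum_mul_sq_le_sq_mul_sq _ _ _
    _ = (∑ i, ∑ j, W i j ^ 2) * ∑ i, d i ^ 2 := by rw [← sum_mul, sum_comm]
    _ ≤ (∑ i, ∑ j, W i j ^ 2) * (∑ i, d i) ^ 2 := by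
        gcongr
        exact sum_sq_le_sq_sum_of_nonneg fun i _ => hd i

lemma natCast_inv_le_self (n : ℕ) : (n : ℝ)⁻¹ ≤ n := by
  rcases n.eq_zero_or_pos with rfl | hn
  · simp
  · exact (Nat.cast_inv_le_one n).trans (by exact_mod_cast hn)

lemma mul_sq_le_of_mul_le {a b w d θ : ℝ} (ha : 0 < a) (hb : 0 < b) (hw : 0 ≤ w) (hd : 0 ≤ d)
    (hbw : b * w ≤ θ) (had : a * d ≤ θ) : w * d ^ 2 ≤ θ ^ 3 / (a ^ 2 * b) := by
  have hθ : 0 ≤ θ := (mul_nonneg hb.le hw).trans hbw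
  rw [le_div_iff₀ (by positivity)]
  calc w * d ^ 2 * (a ^ 2 * b) = (b * w) * (a * d) ^ 2 := by ring
    _ ≤ θ * θ ^ 2 := mul_le_mul hbw (pow_le_pow_left₀ (by positivity) had 2) (by positivity) hθ
    _ = θ ^ 3 := by ring

variable {X : Matrix (Fin N₀) (Fin N) ℝ} {z : Pt N N₀ N₁}

/-- The point `(W, b₁, b₂, V̂)` with `v̂ₙ = (W xₙ + b₁)₊`, which lies in `Ω₁`. -/
def toOmega1 (X : Matrix (Fin N₀) (Fin N) ℝ) (z : Pt N N₀ N₁) : Pt N N₀ N₁ :=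
  (z.1, z.2.1, z.2.2.1, Matrix.of fun i n => relu (preact X z i n))

def slack (X : Matrix (Fin N₀) (Fin N) ℝ) (z : Pt N N₀ N₁) (i : Fin N₁) (n : Fin N) : ℝ :=
  z.2.2.2 i n - relu (preact X z i n)

lemma slack_nonneg (hz : z ∈ Omega2 X) (i : Fin N₁) (n : Fin N) : 0 ≤ slack X z i n :=
  sub_nonneg.2 (hz i n)

lemma outPre_sub_outPre_toOmega1 (j : Fin N₀) (n : Fin N) :
    outPre z j n - outPre (toOmega1 X z) j n = ∑ i, z.1 i j * slack X z i n := by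
  simp only [outPre, toOmega1, slack, Matrix.of_apply, mul_sub, sum_sub_distrib]
  ring

lemma Ov_eq (lam₁ lam₂ β : ℝ) :
    Ov lam₁ lam₂ β X z = Fv X z + lam₁ * ∑ n, ∑ i, relu (preact X z i n)
      + lam₂ * ∑ i, ∑ j, z.1 i j ^ 2 + (lam₁ + β) * ∑ n, ∑ i, slack X z i n := by
  simp only [Ov, Rv, Pv, slack, sum_sub_distrib]
  ring

lemma Fv_toOmega1_le (hz : z ∈ Omega2 X) :
    Fv X (toOmega1 X z) ≤ 2 * Fv X z
      + 2 / N * (∑ i, ∑ j, z.1 i j ^ 2) * (∑ n, ∑ i, slack X z i n) ^ 2 := by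
  set Wsq := ∑ i, ∑ j, z.1 i j ^ 2
  have hcol : ∀ n, ∑ j, (relu (outPre (toOmega1 X z) j n) - X j n) ^ 2
      ≤ 2 * ∑ j, (relu (outPre z j n) - X j n) ^ 2 + 2 * Wsq * (∑ i, slack X z i n) ^ 2 := by
    intro n
    calc ∑ j, (relu (outPre (toOmega1 X z) j n) - X j n) ^ 2
        ≤ ∑ j, (2 * (relu (outPre z j n) - X j n) ^ 2
            + 2 * (∑ i, z.1 i j * slack X z i n) ^ 2) := by
          refine sum_le_sum fun j _ => ?_
          have := sq_relu_sub_le (outPre (toOmega1 X z) j n) (outPre z j n) (X j n)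
          rwa [sub_sq_comm (outPre _ j n), outPre_sub_outPre_toOmega1] at this
      _ = 2 * ∑ j, (relu (outPre z j n) - X j n) ^ 2
            + 2 * ∑ j, (∑ i, z.1 i j * slack X z i n) ^ 2 := by
          rw [sum_add_distrib, mul_sum, mul_sum]
      _ ≤ _ := by
          have := sum_sq_sum_mul_le z.1 (slack_nonneg hz · n)
          linarith
  have hslack : ∑ n, (∑ i, slack X z i n) ^ 2 ≤ (∑ n, ∑ i, slack X z i n) ^ 2 :=
    sum_sq_le_sq_sum_of_nonneg fun n _ => sum_nonneg fun i _ => slack_nonneg hz i n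
  have hsum : ∑ n, ∑ j, (relu (outPre (toOmega1 X z) j n) - X j n) ^ 2
      ≤ 2 * ∑ n, ∑ j, (relu (outPre z j n) - X j n) ^ 2
        + 2 * Wsq * (∑ n, ∑ i, slack X z i n) ^ 2 :=
    calc _ ≤ ∑ n, (2 * ∑ j, (relu (outPre z j n) - X j n) ^ 2
            + 2 * Wsq * (∑ i, slack X z i n) ^ 2) := sum_le_sum fun n _ => hcol n
      _ = 2 * ∑ n, ∑ j, (relu (outPre z j n) - X j n) ^ 2
            + 2 * Wsq * ∑ n, (∑ i, slack X z i n) ^ 2 := by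
          rw [sum_add_distrib, ← mul_sum, ← mul_sum]
      _ ≤ _ := by gcongr
  calc Fv X (toOmega1 X z) ≤ 1 / N * (2 * ∑ n, ∑ j, (relu (outPre z j n) - X j n) ^ 2
        + 2 * Wsq * (∑ n, ∑ i, slack X z i n) ^ 2) := by unfold Fv; gcongr
    _ = _ := by unfold Fv; ring

theorem stmt9_general (N N₀ N₁ : ℕ)
    (lam₁ lam₂ β θ : ℝ) (hlam₁ : 0 < lam₁) (hlam₂ : 0 < lam₂) (hbeta : 0 < β)
    (X : Matrix (Fin N₀) (Fin N) ℝ)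
    (zb : Pt N N₀ N₁) (hzb : zb ∈ Omega2 X) (hzO : Ov lam₁ lam₂ β X zb ≤ θ) :
    (1 / (N : ℝ)) * (∑ n, ∑ j,
        (relu ((∑ i, zb.1 i j * relu (preact X zb i n)) + zb.2.2.1 j) - X j n) ^ 2)
      + lam₁ * (∑ n, ∑ i, relu (preact X zb i n))
    ≤ 3 * θ + 2 * (N : ℝ) * θ ^ 3 / (lam₁ ^ 2 * lam₂) := by
  set Wsq := ∑ i, ∑ j, zb.1 i j ^ 2
  set D := ∑ n, ∑ i, slack X zb i n
  have hVhat : 0 ≤ lam₁ * ∑ n, ∑ i, relu (preact X zb i n) :=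
    mul_nonneg hlam₁.le (sum_nonneg fun n _ => sum_nonneg fun i _ => le_max_right _ _)
  have hD : 0 ≤ D := sum_nonneg fun n _ => sum_nonneg fun i _ => slack_nonneg hzb i n
  have hWsq : 0 ≤ Wsq := by positivity
  have hlamD : 0 ≤ lam₁ * D := mul_nonneg hlam₁.le hD
  have hβD : 0 ≤ β * D := mul_nonneg hbeta.le hD
  have hlamW : 0 ≤ lam₂ * Wsq := mul_nonneg hlam₂.le hWsq
  have hF : 0 ≤ Fv X zb := Fv_nonneg
  rw [Ov_eq] at hzO
  have hWD : Wsq * D ^ 2 ≤ θ ^ 3 / (lam₁ ^ 2 * lam₂) :=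
    mul_sq_le_of_mul_le hlam₁ hlam₂ hWsq hD (by linarith) (by linarith)
  have hrem : 2 / N * Wsq * D ^ 2 ≤ 2 * N * θ ^ 3 / (lam₁ ^ 2 * lam₂) := by
    calc 2 / N * Wsq * D ^ 2 = 2 * (N : ℝ)⁻¹ * (Wsq * D ^ 2) := by ring
      _ ≤ 2 * N * (θ ^ 3 / (lam₁ ^ 2 * lam₂)) := by
          gcongr
          exact natCast_inv_le_self N
      _ = _ := by ring
  have hhat : Fv X (toOmega1 X zb) ≤ 2 * Fv X zb + 2 / N * Wsq * D ^ 2 := Fv_toOmega1_le hzb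
  change Fv X (toOmega1 X zb) + _ ≤ _
  linarith

theorem stmt9 (N N₀ N₁ : ℕ) (hN : 0 < N) (hN₀ : 0 < N₀) (hN₁ : 0 < N₁)
    (lam₁ lam₂ β θ : ℝ) (hlam₁ : 0 < lam₁) (hlam₂ : 0 < lam₂) (hbeta : 0 < β)
    (X : Matrix (Fin N₀) (Fin N) ℝ)
    (hθ : (1 / (N : ℝ)) * ∑ j, ∑ n, (X j n) ^ 2 < θ)
    (hbl : lam₁ ≤ β)
    (zb : Pt N N₀ N₁) (hzb : zb ∈ Omega2 X) (hzO : Ov lam₁ lam₂ β X zb ≤ θ) :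
    (1 / (N : ℝ)) * (∑ n, ∑ j,
        (relu ((∑ i, zb.1 i j * relu (preact X zb i n)) + zb.2.2.1 j) - X j n) ^ 2)
      + lam₁ * (∑ n, ∑ i, relu (preact X zb i n))
    ≤ 3 * θ + 2 * (N : ℝ) * θ ^ 3 / (lam₁ ^ 2 * lam₂) :=
  stmt9_general N N₀ N₁ lam₁ lam₂ β θ hlam₁ hlam₂ hbeta X zb hzb hzO
end
end
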